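/- (Technical counting lemma for D-permutations, variant labels.) Let σ be a D-permutation of [2n], let F = {2, 4, …, 2n}, and let F′ = {σ(2), σ(4), …, σ(2n)} with elements y_1 < y_2 < ⋯ < y_n. Fix an index j with 1 ≤ j ≤ n such that y_j is odd (equivalently, y_j is a cycle valley of σ). Then {u ∈ F : u > y_j and u ∉ {σ⁻¹(y_{j+1}), …, σ⁻¹(y_n)}} = {u : u > y_j and σ(u) ≤ y_j}, and the cardinality of this set equals f_{y_j} := #{i ≤ y_j : σ(i) > y_j}. -/
import Mathlib


open scoped Classical
open Finset

noncomputable section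

namespace CFPaper

/-! ### Lattice-path machinery -/

inductive MStep | up | down | level
deriving DecidableEq

/-- all lists of Motzkin steps of length `n`. -/
def mlists : ℕ → Finset (List MStep)
  | 0 => {[]}
  | n + 1 =>
      (mlists n).image (MStep.up :: ·) ∪ (mlists n).image (MStep.down :: ·) ∪
        (mlists n).image (MStep.level :: ·)

/-- `MValid h p` : starting from height `h`, the path `p` stays at heights `≥ 0`
(automatic, heights being natural numbers) and ends at height `0`. -/
inductive MValid : ℕ → List MStep → Prop
  | nil : MValid 0 []
  | up {h : ℕ} {p : List MStep} : MValid (h + 1) p → MValid h (MStep.up :: p)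
  | down {h : ℕ} {p : List MStep} : MValid h p → MValid (h + 1) (MStep.down :: p)
  | level {h : ℕ} {p : List MStep} : MValid h p → MValid h (MStep.level :: p)

inductive DStep | up | down
deriving DecidableEq

/-- all lists of Dyck steps of length `n`. -/
def dlists : ℕ → Finset (List DStep)
  | 0 => {[]}
  | n + 1 => (dlists n).image (DStep.up :: ·) ∪ (dlists n).image (DStep.down :: ·)

inductive DValid : ℕ → List DStep → Prop
  | nil : DValid 0 []
  | up {h : ℕ} {p : List DStep} : DValid (h + 1) p → DValid h (DStep.up :: p)
  | down {h : ℕ} {p : List DStep} : DValid h p → DValid (h + 1) (DStep.down :: p)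

inductive SStep | up | down | lvl
deriving DecidableEq

/-- all lists of Schröder steps of total width `m` (a long level step `lvl` has width 2). -/
def slists : ℕ → Finset (List SStep)
  | 0 => {[]}
  | 1 => (slists 0).image (SStep.up :: ·) ∪ (slists 0).image (SStep.down :: ·)
  | m + 2 =>
      (slists (m + 1)).image (SStep.up :: ·) ∪ (slists (m + 1)).image (SStep.down :: ·) ∪
        (slists m).image (SStep.lvl :: ·)

inductive SValid : ℕ → List SStep → Prop
  | nil : SValid 0 []
  | up {h : ℕ} {p : List SStep} : SValid (h + 1) p → SValid h (SStep.up :: p)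
  | down {h : ℕ} {p : List SStep} : SValid h p → SValid (h + 1) (SStep.down :: p)
  | lvl {h : ℕ} {p : List SStep} : SValid h p → SValid h (SStep.lvl :: p)

variable {R : Type*} [CommRing R]

/-- weight of a Motzkin path, read off from the current height: each rise has weight 1,
each fall starting at height `h` has weight `β h`, each level step at height `h` has
weight `γ h`. -/
def mweight (β γ : ℕ → R) : ℕ → List MStep → R
  | _, [] => 1
  | h, MStep.up :: p => mweight β γ (h + 1) p
  | h, MStep.down :: p => β h * mweight β γ (h - 1) p
  | h, MStep.level :: p => γ h * mweight β γ h p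

/-- sum over all Motzkin paths of length `n` of the product of the step weights. -/
def motzkinSum (β γ : ℕ → R) (n : ℕ) : R :=
  ∑ p ∈ (mlists n).filter (MValid 0), mweight β γ 0 p

def dweight (α : ℕ → R) : ℕ → List DStep → R
  | _, [] => 1
  | h, DStep.up :: p => dweight α (h + 1) p
  | h, DStep.down :: p => α h * dweight α (h - 1) p

/-- sum over all Dyck paths of length `2*n` of the product over falls of `α h`,
`h` being the starting height of the fall (rises have weight 1). -/
def dyckSum (α : ℕ → R) (n : ℕ) : R :=
  ∑ p ∈ (dlists (2 * n)).filter (DValid 0), dweight α 0 p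

def sweight (α δ : ℕ → R) : ℕ → List SStep → R
  | _, [] => 1
  | h, SStep.up :: p => sweight α δ (h + 1) p
  | h, SStep.down :: p => α h * sweight α δ (h - 1) p
  | h, SStep.lvl :: p => δ h * sweight α δ h p

/-- sum over all Schröder paths of length `2*n` of the product of step weights:
rises have weight 1, a fall starting at height `h` has weight `α h`, a long level step
at height `h` has weight `δ h`. -/
def schroederSum (α δ : ℕ → R) (n : ℕ) : R :=
  ∑ p ∈ (slists (2 * n)).filter (SValid 0), sweight α δ 0 p

/-- `(p,q)`-integer `[m]_{p,q} = Σ_{i=0}^{m-1} p^i q^(m-1-i)`. -/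
def pqInt (p q : R) (m : ℕ) : R := ∑ i ∈ Finset.range m, p ^ i * q ^ (m - 1 - i)

/-! ### Permutation statistics -/

variable {n : ℕ}

/-- number of indices satisfying `P`. -/
def cnt (P : Fin n → Prop) : ℕ := (Finset.univ.filter P).card

def IsCpeak (σ : Equiv.Perm (Fin n)) (i : Fin n) : Prop := σ.symm i < i ∧ σ i < i
def IsCval (σ : Equiv.Perm (Fin n)) (i : Fin n) : Prop := i < σ.symm i ∧ i < σ i
def IsCdrise (σ : Equiv.Perm (Fin n)) (i : Fin n) : Prop := σ.symm i < i ∧ i < σ i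
def IsCdfall (σ : Equiv.Perm (Fin n)) (i : Fin n) : Prop := i < σ.symm i ∧ σ i < i
def IsFixPt (σ : Equiv.Perm (Fin n)) (i : Fin n) : Prop := σ i = i

def IsRec (σ : Equiv.Perm (Fin n)) (i : Fin n) : Prop := ∀ j, j < i → σ j < σ i
def IsArec (σ : Equiv.Perm (Fin n)) (i : Fin n) : Prop := ∀ j, i < j → σ i < σ j
def IsErec (σ : Equiv.Perm (Fin n)) (i : Fin n) : Prop := IsRec σ i ∧ ¬ IsArec σ i
def IsEarec (σ : Equiv.Perm (Fin n)) (i : Fin n) : Prop := IsArec σ i ∧ ¬ IsRec σ i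
def IsRar (σ : Equiv.Perm (Fin n)) (i : Fin n) : Prop := IsRec σ i ∧ IsArec σ i
def IsNrar (σ : Equiv.Perm (Fin n)) (i : Fin n) : Prop := ¬ IsRec σ i ∧ ¬ IsArec σ i

/-- `i` is a record value iff `σ⁻¹ i` is a record. -/
def IsRecV (σ : Equiv.Perm (Fin n)) (i : Fin n) : Prop := IsRec σ (σ.symm i)
def IsArecV (σ : Equiv.Perm (Fin n)) (i : Fin n) : Prop := IsArec σ (σ.symm i)
def IsErecV (σ : Equiv.Perm (Fin n)) (i : Fin n) : Prop := IsRecV σ i ∧ ¬ IsArecV σ i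
def IsEarecV (σ : Equiv.Perm (Fin n)) (i : Fin n) : Prop := IsArecV σ i ∧ ¬ IsRecV σ i
def IsNrarV (σ : Equiv.Perm (Fin n)) (i : Fin n) : Prop := ¬ IsRecV σ i ∧ ¬ IsArecV σ i

/-- the index `i : Fin n` represents the one-based index `i+1`; it is "even" if `i+1` is even. -/
def IsEvenIdx (i : Fin n) : Prop := Even ((i : ℕ) + 1)
def IsOddIdx (i : Fin n) : Prop := Odd ((i : ℕ) + 1)

/-- `i` is the smallest element of its cycle. -/
def IsCycMin (σ : Equiv.Perm (Fin n)) (i : Fin n) : Prop := ∀ j, σ.SameCycle i j → i ≤ j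

/-- number of cycles (counting fixed points as cycles), i.e. number of cycle minima. -/
def cyc (σ : Equiv.Perm (Fin n)) : ℕ := cnt (IsCycMin σ)

def eareccpeak (σ : Equiv.Perm (Fin n)) : ℕ := cnt fun i => IsEarec σ i ∧ IsCpeak σ i
def eareccdfall (σ : Equiv.Perm (Fin n)) : ℕ := cnt fun i => IsEarec σ i ∧ IsCdfall σ i
def ereccval (σ : Equiv.Perm (Fin n)) : ℕ := cnt fun i => IsErec σ i ∧ IsCval σ i
def ereccdrise (σ : Equiv.Perm (Fin n)) : ℕ := cnt fun i => IsErec σ i ∧ IsCdrise σ i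
def nrcpeak (σ : Equiv.Perm (Fin n)) : ℕ := cnt fun i => IsNrar σ i ∧ IsCpeak σ i
def nrcdfall (σ : Equiv.Perm (Fin n)) : ℕ := cnt fun i => IsNrar σ i ∧ IsCdfall σ i
def nrcval (σ : Equiv.Perm (Fin n)) : ℕ := cnt fun i => IsNrar σ i ∧ IsCval σ i
def nrcdrise (σ : Equiv.Perm (Fin n)) : ℕ := cnt fun i => IsNrar σ i ∧ IsCdrise σ i
def cval (σ : Equiv.Perm (Fin n)) : ℕ := cnt (IsCval σ)

def ereccpeak' (σ : Equiv.Perm (Fin n)) : ℕ := cnt fun i => IsErecV σ i ∧ IsCpeak σ i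
def eareccdfall' (σ : Equiv.Perm (Fin n)) : ℕ := cnt fun i => IsEarecV σ i ∧ IsCdfall σ i
def eareccval' (σ : Equiv.Perm (Fin n)) : ℕ := cnt fun i => IsEarecV σ i ∧ IsCval σ i
def ereccdrise' (σ : Equiv.Perm (Fin n)) : ℕ := cnt fun i => IsErecV σ i ∧ IsCdrise σ i
def nrcpeak' (σ : Equiv.Perm (Fin n)) : ℕ := cnt fun i => IsNrarV σ i ∧ IsCpeak σ i
def nrcdfall' (σ : Equiv.Perm (Fin n)) : ℕ := cnt fun i => IsNrarV σ i ∧ IsCdfall σ i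
def nrcval' (σ : Equiv.Perm (Fin n)) : ℕ := cnt fun i => IsNrarV σ i ∧ IsCval σ i
def nrcdrise' (σ : Equiv.Perm (Fin n)) : ℕ := cnt fun i => IsNrarV σ i ∧ IsCdrise σ i

def evennrfix (σ : Equiv.Perm (Fin n)) : ℕ :=
  cnt fun i => IsFixPt σ i ∧ IsEvenIdx i ∧ ¬ IsRar σ i
def oddnrfix (σ : Equiv.Perm (Fin n)) : ℕ :=
  cnt fun i => IsFixPt σ i ∧ IsOddIdx i ∧ ¬ IsRar σ i
def evenrar (σ : Equiv.Perm (Fin n)) : ℕ :=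
  cnt fun i => IsFixPt σ i ∧ IsEvenIdx i ∧ IsRar σ i
def oddrar (σ : Equiv.Perm (Fin n)) : ℕ :=
  cnt fun i => IsFixPt σ i ∧ IsOddIdx i ∧ IsRar σ i

/-- number of cycle valleys that are the minimum of their cycle. -/
def minval (σ : Equiv.Perm (Fin n)) : ℕ := cnt fun i => IsCval σ i ∧ IsCycMin σ i
/-- number of cycle valleys that are not the minimum of their cycle. -/
def nminval (σ : Equiv.Perm (Fin n)) : ℕ := cnt fun i => IsCval σ i ∧ ¬ IsCycMin σ i

/-- pseudo-nesting number of the index `i`. -/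
def psnest (σ : Equiv.Perm (Fin n)) (i : Fin n) : ℕ := cnt fun j => j < i ∧ i < σ j

def fixSet (σ : Equiv.Perm (Fin n)) : Finset (Fin n) := Finset.univ.filter (IsFixPt σ)

def psnestTot (σ : Equiv.Perm (Fin n)) : ℕ := ∑ i ∈ fixSet σ, psnest σ i
def epsnest (σ : Equiv.Perm (Fin n)) : ℕ :=
  ∑ i ∈ Finset.univ.filter (fun i => IsFixPt σ i ∧ IsEvenIdx i), psnest σ i
def opsnest (σ : Equiv.Perm (Fin n)) : ℕ :=
  ∑ i ∈ Finset.univ.filter (fun i => IsFixPt σ i ∧ IsOddIdx i), psnest σ i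

def ucross (σ : Equiv.Perm (Fin n)) (j : Fin n) : ℕ :=
  cnt fun i => i < j ∧ j < σ i ∧ σ i < σ j
def unest (σ : Equiv.Perm (Fin n)) (j : Fin n) : ℕ :=
  cnt fun i => i < j ∧ j < σ j ∧ σ j < σ i
def lcross (σ : Equiv.Perm (Fin n)) (k : Fin n) : ℕ :=
  cnt fun l => k < l ∧ σ k < σ l ∧ σ l < k
def lnest (σ : Equiv.Perm (Fin n)) (k : Fin n) : ℕ :=
  cnt fun l => k < l ∧ σ l < σ k ∧ σ k < k

def ucross' (σ : Equiv.Perm (Fin n)) (k : Fin n) : ℕ :=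
  cnt fun j => σ.symm k < j ∧ j < k ∧ k < σ j
def unest' (σ : Equiv.Perm (Fin n)) (k : Fin n) : ℕ :=
  cnt fun i => i < σ.symm k ∧ σ.symm k < k ∧ k < σ i
def lcross' (σ : Equiv.Perm (Fin n)) (j : Fin n) : ℕ :=
  cnt fun k => σ k < j ∧ j < k ∧ k < σ.symm j
def lnest' (σ : Equiv.Perm (Fin n)) (j : Fin n) : ℕ :=
  cnt fun l => σ l < j ∧ j < σ.symm j ∧ σ.symm j < l

def ucrosscval (σ : Equiv.Perm (Fin n)) : ℕ := ∑ i ∈ Finset.univ.filter (IsCval σ), ucross σ i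
def unestcval (σ : Equiv.Perm (Fin n)) : ℕ := ∑ i ∈ Finset.univ.filter (IsCval σ), unest σ i
def ucrosscdrise (σ : Equiv.Perm (Fin n)) : ℕ := ∑ i ∈ Finset.univ.filter (IsCdrise σ), ucross σ i
def unestcdrise (σ : Equiv.Perm (Fin n)) : ℕ := ∑ i ∈ Finset.univ.filter (IsCdrise σ), unest σ i
def lcrosscpeak (σ : Equiv.Perm (Fin n)) : ℕ := ∑ i ∈ Finset.univ.filter (IsCpeak σ), lcross σ i
def lnestcpeak (σ : Equiv.Perm (Fin n)) : ℕ := ∑ i ∈ Finset.univ.filter (IsCpeak σ), lnest σ i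
def lcrosscdfall (σ : Equiv.Perm (Fin n)) : ℕ := ∑ i ∈ Finset.univ.filter (IsCdfall σ), lcross σ i
def lnestcdfall (σ : Equiv.Perm (Fin n)) : ℕ := ∑ i ∈ Finset.univ.filter (IsCdfall σ), lnest σ i

def ucrosscpeak' (σ : Equiv.Perm (Fin n)) : ℕ := ∑ i ∈ Finset.univ.filter (IsCpeak σ), ucross' σ i
def unestcpeak' (σ : Equiv.Perm (Fin n)) : ℕ := ∑ i ∈ Finset.univ.filter (IsCpeak σ), unest' σ i
def lcrosscval' (σ : Equiv.Perm (Fin n)) : ℕ := ∑ i ∈ Finset.univ.filter (IsCval σ), lcross' σ i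
def lnestcval' (σ : Equiv.Perm (Fin n)) : ℕ := ∑ i ∈ Finset.univ.filter (IsCval σ), lnest' σ i
def lcrosscdfall' (σ : Equiv.Perm (Fin n)) : ℕ := ∑ i ∈ Finset.univ.filter (IsCdfall σ), lcross' σ i
def lnestcdfall' (σ : Equiv.Perm (Fin n)) : ℕ := ∑ i ∈ Finset.univ.filter (IsCdfall σ), lnest' σ i
def ucrosscdrise' (σ : Equiv.Perm (Fin n)) : ℕ := ∑ i ∈ Finset.univ.filter (IsCdrise σ), ucross' σ i
def unestcdrise' (σ : Equiv.Perm (Fin n)) : ℕ := ∑ i ∈ Finset.univ.filter (IsCdrise σ), unest' σ i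

/-- D-permutation: `2k-1 ≤ σ(2k-1)` and `2k ≥ σ(2k)` in one-based indexing. -/
def IsDPerm (σ : Equiv.Perm (Fin n)) : Prop :=
  ∀ i : Fin n, (IsOddIdx i → i ≤ σ i) ∧ (IsEvenIdx i → σ i ≤ i)

/-- D-o-semiderangement: a D-permutation with no odd fixed points. -/
def IsDoSemi (σ : Equiv.Perm (Fin n)) : Prop :=
  IsDPerm σ ∧ ∀ i, IsFixPt σ i → IsEvenIdx i

def lema (σ : Equiv.Perm (Fin n)) : ℕ := cnt fun i => IsRec σ i ∧ IsEvenIdx (σ i)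
def romi (σ : Equiv.Perm (Fin n)) : ℕ := cnt fun i => IsArec σ i ∧ IsOddIdx (σ i)
def remi (σ : Equiv.Perm (Fin n)) : ℕ := cnt fun i => IsArec σ i ∧ IsEvenIdx (σ i)
def fixCnt (σ : Equiv.Perm (Fin n)) : ℕ := cnt (IsFixPt σ)
def comi (σ : Equiv.Perm (Fin n)) : ℕ := cnt fun i => IsOddIdx i ∧ IsCycMin σ i
def cemi (σ : Equiv.Perm (Fin n)) : ℕ := cnt fun i => IsEvenIdx i ∧ IsCycMin σ i

/-- the edge relation of the directed graph on `Fin n` with an edge `u → σ u`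
for every `u ∈ S`. -/
def edgeOf (σ : Equiv.Perm (Fin n)) (S : Set (Fin n)) (u v : Fin n) : Prop :=
  u ∈ S ∧ v = σ u

/-- technical counting lemma for D-permutations, variant labels:
for `y ∈ F' = {σ(even)}` odd (a cycle valley), the even positions exceeding `y` that
are not of the form `σ⁻¹ w` with `w ∈ F'`, `w > y`, are exactly the `u > y` with
`σ u ≤ y`, and their number is `f_y = #{i ≤ y : σ i > y}`. -/
theorem statement19 (n : ℕ) (σ : Equiv.Perm (Fin (2 * n))) (hσ : IsDPerm σ)
    (y : Fin (2 * n)) (hy : IsOddIdx y) (hy' : IsEvenIdx (σ.symm y)) :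
    (Finset.univ.filter (fun u : Fin (2 * n) =>
        IsEvenIdx u ∧ y < u ∧ ∀ w, IsEvenIdx (σ.symm w) → y < w → σ.symm w ≠ u))
      = (Finset.univ.filter fun u : Fin (2 * n) => y < u ∧ σ u ≤ y) ∧
    (Finset.univ.filter fun u : Fin (2 * n) => y < u ∧ σ u ≤ y).card
      = (Finset.univ.filter fun i : Fin (2 * n) => i ≤ y ∧ y < σ i).card := by
  constructor
  · ext u
    simp only [Finset.mem_filter, Finset.mem_univ, true_and]
    constructor
    · rintro ⟨he, hlt, hw⟩
      refine ⟨hlt, ?_⟩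
      by_contra hle
      push_neg at hle
      exact hw (σ u) (by simpa using he) hle (by simp)
    · rintro ⟨hlt, hle⟩
      have heu : IsEvenIdx u := by
        by_contra ho
        have hodd : IsOddIdx u := Nat.not_even_iff_odd.mp ho
        have := (hσ u).1 hodd
        exact absurd (le_trans this hle) (not_le.mpr hlt)
      refine ⟨heu, hlt, ?_⟩
      intro w hwE hwlt heq
      have hwu : w = σ u := by
        have := congrArg σ heq
        simpa using this
      rw [hwu] at hwlt
      exact absurd hwlt (not_lt.mpr hle)
  · have hbij : (Finset.univ.filter fun u : Fin (2 * n) => σ u ≤ y).card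
        = (Finset.univ.filter fun u : Fin (2 * n) => u ≤ y).card := by
      apply Finset.card_bij' (fun u _ => σ u) (fun u _ => σ.symm u)
      · intro a ha; simp only [Finset.mem_filter, Finset.mem_univ, true_and] at ha ⊢; exact ha
      · intro a ha; simp only [Finset.mem_filter, Finset.mem_univ, true_and] at ha ⊢
        simpa using ha
      · intros; simp
      · intros; simp
    have s1 := Finset.card_filter_add_card_filter_not
      (s := Finset.univ.filter fun u : Fin (2 * n) => σ u ≤ y) (p := fun u => y < u)
    have s2 := Finset.card_filter_add_card_filter_not
      (s := Finset.univ.filter fun u : Fin (2 * n) => u ≤ y) (p := fun u => y < σ u)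
    have e1 : (Finset.univ.filter fun u : Fin (2 * n) => σ u ≤ y ∧ y < u)
        = (Finset.univ.filter fun u : Fin (2 * n) => y < u ∧ σ u ≤ y) := by
      apply Finset.filter_congr; intro u _; simp [and_comm]
    have e2 : (Finset.univ.filter fun u : Fin (2 * n) => σ u ≤ y ∧ u ≤ y)
        = (Finset.univ.filter fun u : Fin (2 * n) => u ≤ y ∧ σ u ≤ y) := by
      apply Finset.filter_congr; intro u _; simp [and_comm]
    simp only [Finset.filter_filter] at s1 s2
    simp only [not_lt] at s1 s2
    rw [e1, e2] at s1
    omega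

end CFPaper

end
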